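/- arXiv:1708.04849 — 4 statements merged into one kernel-verified Lean document; each statement's English description precedes it below -/
import Mathlib

section
/- Central-firing is terminating: for any crystallographic root system Φ in a Euclidean space V with weight lattice P, there is no infinite sequence λ₀, λ₁, λ₂, … of weights such that for each i, λ_{i+1} = λ_i + α for some positive root α with ⟨λ_i, α∨⟩ = 0. -/
open scoped RealInnerProductSpace

noncomputable section

namespace CF

variable {V : Type*} [NormedAddCommGroup V] [InnerProductSpace ℝ V]

/-- The coroot `α∨ = 2α/⟨α,α⟩`. -/
def coroot (α : V) : V := (2 / ⟪α, α⟫) • α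

/-- A reduced crystallographic root system in `V`. -/
def IsRootSystem (Φ : Set V) : Prop :=
  Φ.Finite ∧ (0 : V) ∉ Φ ∧ Submodule.span ℝ Φ = ⊤ ∧
    (∀ α ∈ Φ, ∀ β ∈ Φ, β - ⟪β, coroot α⟫ • α ∈ Φ) ∧
    (∀ α ∈ Φ, ∀ t : ℝ, t • α ∈ Φ → t = 1 ∨ t = -1) ∧
    (∀ α ∈ Φ, ∀ β ∈ Φ, ∃ n : ℤ, ⟪β, coroot α⟫ = (n : ℝ))

/-- A choice of positive roots `Φ⁺ ⊆ Φ` (exactly one of `±α` is positive, and the positive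
roots lie strictly on one side of a hyperplane). -/
def IsPositiveSystem (Φ Φp : Set V) : Prop :=
  Φp ⊆ Φ ∧ (∀ α ∈ Φ, (α ∈ Φp ∨ -α ∈ Φp) ∧ ¬(α ∈ Φp ∧ -α ∈ Φp)) ∧
    ∃ ℓ : V →ₗ[ℝ] ℝ, ∀ α ∈ Φp, 0 < ℓ α

/-- The weight lattice `P = {v : ⟨v, α∨⟩ ∈ ℤ for all α ∈ Φ}`. -/
def weightLattice (Φ : Set V) : Set V :=
  {v | ∀ α ∈ Φ, ∃ n : ℤ, ⟪v, coroot α⟫ = (n : ℝ)}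

/-- Central-firing: `λ → λ + α` whenever `α ∈ Φ⁺` and `⟨λ, α∨⟩ = 0`. -/
def fire (Φp : Set V) (lam mu : V) : Prop :=
  ∃ α ∈ Φp, ⟪lam, coroot α⟫ = 0 ∧ mu = lam + α

/-- The Weyl group: the group of linear isometries generated by the reflections `s_α`, `α ∈ Φ`. -/
def weylGroup (Φ : Set V) : Subgroup (V ≃ₗᵢ[ℝ] V) :=
  Subgroup.closure {g | ∃ α ∈ Φ, ∀ v, g v = v - ⟪v, coroot α⟫ • α}

/-- `v` and `w` lie in the same Weyl group orbit. -/
def sameOrbit (Φ : Set V) (v w : V) : Prop := ∃ g ∈ weylGroup Φ, g v = w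

def weylOrbit (Φ : Set V) (v : V) : Set V := {w | sameOrbit Φ v w}

/-- The root lattice `Q`. -/
def rootLattice (Φ : Set V) : AddSubgroup V := AddSubgroup.closure Φ

/-- `Π^Q(λ)`: the points of the permutohedron `Π(λ) = ConvexHull(Wλ)` lying in `λ + Q`. -/
def permQ (Φ : Set V) (lam : V) : Set V :=
  {mu | mu ∈ convexHull ℝ (weylOrbit Φ lam) ∧ lam - mu ∈ rootLattice Φ}

def IsDominant (Δ : Set V) (lam : V) : Prop := ∀ a ∈ Δ, 0 ≤ ⟪lam, coroot a⟫

def IsStrictlyDominant (Δ : Set V) (lam : V) : Prop := ∀ a ∈ Δ, 0 < ⟪lam, coroot a⟫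

/-- A minuscule weight: a nonzero dominant weight whose `Π^Q` consists of its Weyl orbit. -/
def IsMinuscule (Φ Δ : Set V) (w : V) : Prop :=
  w ≠ 0 ∧ IsDominant Δ w ∧ ∀ mu ∈ permQ Φ w, sameOrbit Φ w mu

/-- `Δ` is a system of simple roots for the positive system `Φ⁺`. -/
def IsSimpleSystem (Φp : Set V) (Δ : Finset V) : Prop :=
  (Δ : Set V) ⊆ Φp ∧ LinearIndependent ℝ (fun a : (Δ : Set V) => (a : V)) ∧
    ∀ α ∈ Φp, ∃ c : V → ℝ, (∀ a ∈ Δ, 0 ≤ c a) ∧ α = ∑ a ∈ Δ, c a • a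

def IsSimplyLaced (Φ : Set V) : Prop := ∀ α ∈ Φ, ∀ β ∈ Φ, ⟪α, α⟫ = ⟪β, β⟫

/-- Irreducibility: `Φ` cannot be split into two nonempty mutually orthogonal parts. -/
def IsIrreducibleRS (Φ : Set V) : Prop :=
  ¬ ∃ S T : Set V, S.Nonempty ∧ T.Nonempty ∧ S ∪ T = Φ ∧ ∀ a ∈ S, ∀ b ∈ T, ⟪a, b⟫ = 0

/-- The firing span `FS_S(λ) = Span_ℝ{μ − λ : λ →* μ}`. -/
def firingSpan (Φp : Set V) (lam : V) : Submodule ℝ V :=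
  Submodule.span ℝ {d | ∃ mu, Relation.ReflTransGen (fire Φp) lam mu ∧ d = mu - lam}

/-- Central-firing on Weyl orbits: `Wλ → Wμ` iff some representatives fire. -/
def ofire (Φ Φp : Set V) (lam mu : V) : Prop :=
  ∃ lam' mu', sameOrbit Φ lam lam' ∧ sameOrbit Φ mu mu' ∧ fire Φp lam' mu'

/-- Connectivity of roots within a subset `Ψ` (via non-orthogonality). -/
def sameComponent (Ψ : Set V) (β γ : V) : Prop :=
  Relation.ReflTransGen (fun x y => x ∈ Ψ ∧ y ∈ Ψ ∧ ⟪x, y⟫ ≠ 0) β γ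

/-- Confluence of central-firing from `λ`: all maximal firing sequences from `λ`
terminate at the same weight. -/
def ConfluentFrom (S : Set V) (lam : V) : Prop :=
  ∀ mu₁ mu₂ : V, Relation.ReflTransGen (fire S) lam mu₁ → (¬ ∃ ν, fire S mu₁ ν) →
    Relation.ReflTransGen (fire S) lam mu₂ → (¬ ∃ ν, fire S mu₂ ν) → mu₁ = mu₂

/-- central-firing is terminating. -/
theorem central_firing_terminating (Φ Φp : Finset V)
    (hΦ : IsRootSystem (Φ : Set V)) (hp : IsPositiveSystem (Φ : Set V) (Φp : Set V)) :
    ¬ ∃ f : ℕ → V, (∀ i, f i ∈ weightLattice (Φ : Set V)) ∧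
      ∀ i, ∃ α ∈ Φp, ⟪f i, coroot α⟫ = 0 ∧ f (i + 1) = f i + α := by
  rintro ⟨f, -, hf⟩
  obtain ⟨-, h0, hspan, -, -, -⟩ := hΦ
  obtain ⟨hsub, -, ℓ, hℓ⟩ := hp
  choose α hmem hzero heq using hf
  -- V is finite dimensional
  have hFD : FiniteDimensional ℝ V := by
    have := FiniteDimensional.span_of_finite ℝ (Φ : Set V).toFinite
    rw [hspan] at this
    exact Module.Finite.equiv (Submodule.topEquiv)
  -- roots are in Φ and nonzero
  have hmemΦ : ∀ i, α i ∈ (Φ : Set V) := fun i => hsub (hmem i)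
  have hne : ∀ i, α i ≠ 0 := by
    intro i h
    exact h0 (h ▸ hmemΦ i)
  -- orthogonality at each step
  have hinner : ∀ i, ⟪f i, α i⟫ = 0 := by
    intro i
    have h := hzero i
    rw [coroot, real_inner_smul_right] at h
    have h2 : (2 : ℝ) / ⟪α i, α i⟫ ≠ 0 := by
      have : ⟪α i, α i⟫ ≠ 0 := inner_self_ne_zero.mpr (hne i)
      positivity
    exact (mul_eq_zero.mp h).resolve_left h2
  -- norm recursion
  have hnorm : ∀ i, ‖f (i + 1)‖ ^ 2 = ‖f i‖ ^ 2 + ‖α i‖ ^ 2 := by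
    intro i
    rw [heq i, norm_add_sq_real, hinner i]
    ring
  -- ℓ recursion
  have hlstep : ∀ i, ℓ (f (i + 1)) = ℓ (f i) + ℓ (α i) := by
    intro i
    rw [heq i, map_add]
  -- min of ℓ and max of norm² over the finite set Φp
  have hne' : Φp.Nonempty := ⟨α 0, hmem 0⟩
  obtain ⟨cβ, hcβ, hcmin⟩ := Φp.exists_min_image ℓ hne'
  obtain ⟨mβ, hmβ, hmmax⟩ := Φp.exists_max_image (fun v => ‖v‖ ^ 2) hne'
  set c : ℝ := ℓ cβ with hc
  set M : ℝ := ‖mβ‖ ^ 2 with hM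
  have hcpos : 0 < c := hℓ cβ hcβ
  have hMnn : 0 ≤ M := sq_nonneg _
  -- linear lower bound on ℓ (f n)
  have hL : ∀ n : ℕ, ℓ (f 0) + n * c ≤ ℓ (f n) := by
    intro n
    induction n with
    | zero => simp
    | succ n ih =>
      rw [hlstep n]
      have := hcmin (α n) (hmem n)
      push_cast
      linarith
  -- linear upper bound on ‖f n‖²
  have hN : ∀ n : ℕ, ‖f n‖ ^ 2 ≤ ‖f 0‖ ^ 2 + n * M := by
    intro n
    induction n with
    | zero => simp
    | succ n ih =>
      rw [hnorm n]
      have := hmmax (α n) (hmem n)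
      push_cast
      linarith
  -- ℓ is bounded: ℓ v ≤ C ‖v‖
  set ℓ' := LinearMap.toContinuousLinearMap ℓ with hℓ'
  set C : ℝ := ‖ℓ'‖ with hCdef
  have hCnn : 0 ≤ C := norm_nonneg _
  have hCb : ∀ v, ℓ v ≤ C * ‖v‖ := by
    intro v
    have h1 : ℓ v ≤ |ℓ v| := le_abs_self _
    have h2 : ‖ℓ' v‖ ≤ C * ‖v‖ := ℓ'.le_opNorm v
    have h3 : ℓ' v = ℓ v := rfl
    rw [h3, Real.norm_eq_abs] at h2
    linarith
  set A : ℝ := ℓ (f 0) with hA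
  set B : ℝ := ‖f 0‖ ^ 2 with hB
  have hBnn : 0 ≤ B := sq_nonneg _
  -- choose n big enough
  obtain ⟨n, hn⟩ := exists_nat_ge
    ((|A| + 1) / c + (2 * |A| * c + C ^ 2 * M + C ^ 2 * B + A ^ 2 + 1) / c ^ 2 + 1)
  have habs : -|A| ≤ A := neg_abs_le A
  have hterm1 : 0 ≤ (|A| + 1) / c := by positivity
  have hterm2 : 0 ≤ (2 * |A| * c + C ^ 2 * M + C ^ 2 * B + A ^ 2 + 1) / c ^ 2 := by positivity
  have hn1R : (|A| + 1) / c ≤ (n : ℝ) := by linarith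
  have hn2R : (2 * |A| * c + C ^ 2 * M + C ^ 2 * B + A ^ 2 + 1) / c ^ 2 ≤ (n : ℝ) := by linarith
  have hn3 : (1 : ℝ) ≤ (n : ℝ) := by linarith
  have hcn : |A| + 1 ≤ c * n := by
    rw [div_le_iff₀ hcpos] at hn1R
    linarith
  have hc2n : 2 * |A| * c + C ^ 2 * M + C ^ 2 * B + A ^ 2 + 1 ≤ c ^ 2 * n := by
    rw [div_le_iff₀ (by positivity : (0:ℝ) < c ^ 2)] at hn2R
    linarith
  have h1 : A + n * c ≤ ℓ (f n) := hL n
  have h2 : ℓ (f n) ≤ C * ‖f n‖ := hCb (f n)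
  have h3 : ‖f n‖ ^ 2 ≤ B + n * M := hN n
  have hposAn : 0 < A + n * c := by linarith
  have hsq : (A + n * c) ^ 2 ≤ (C * ‖f n‖) ^ 2 := by
    have h12 : A + n * c ≤ C * ‖f n‖ := by linarith
    exact pow_le_pow_left₀ hposAn.le h12 2
  have hsq2 : (C * ‖f n‖) ^ 2 ≤ C ^ 2 * (B + n * M) := by
    have := mul_le_mul_of_nonneg_left h3 (sq_nonneg C)
    calc (C * ‖f n‖) ^ 2 = C ^ 2 * ‖f n‖ ^ 2 := by ring
      _ ≤ C ^ 2 * (B + n * M) := this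
  -- final contradiction: quadratic ≤ linear fails
  have key : (A + n * c) ^ 2 ≤ C ^ 2 * (B + n * M) := hsq.trans hsq2
  have hn0 : (0 : ℝ) ≤ (n : ℝ) := by positivity
  have hprod : (2 * |A| * c + C ^ 2 * M + C ^ 2 * B + A ^ 2 + 1) * n ≤ c ^ 2 * n * n :=
    mul_le_mul_of_nonneg_right hc2n hn0
  have h5 : (-|A|) * (2 * c * n) ≤ A * (2 * c * n) :=
    mul_le_mul_of_nonneg_right habs (by positivity)
  have h6 : C ^ 2 * B ≤ C ^ 2 * B * n :=
    le_mul_of_one_le_right (by positivity) hn3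
  have h7 : (0 : ℝ) ≤ A ^ 2 * n := mul_nonneg (sq_nonneg A) hn0
  have h8 : (0 : ℝ) ≤ A ^ 2 := sq_nonneg A
  linarith [key, hprod, h5, h6, h7, h8, hn3]


end CF
end
end

section
/- In a simply laced root system, dominant weights can fire to dominant weights: if λ is dominant and λ → λ + β is a central-firing move (β ∈ Φ⁺, ⟨λ, β∨⟩ = 0), then letting θ' be the highest root of the irreducible component of the parabolic sub-root system Φ ∩ Span{αᵢ : ⟨λ, αᵢ∨⟩ = 0} containing β, the weight λ + θ' is dominant and lies in the Weyl orbit of λ + β. -/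
open scoped RealInnerProductSpace

noncomputable section

namespace CF

variable {V : Type*} [NormedAddCommGroup V] [InnerProductSpace ℝ V]

/-!
Roots of the parabolic subsystem are orthogonal to `λ`, and in a simply laced root system two
non-orthogonal roots `γ ≠ ±δ` satisfy `⟨γ, δ∨⟩ = ±1`, so that `s_γ s_δ γ = ∓δ`. Walking along a
chain of non-orthogonal roots from `β` to `θ'` therefore gives a Weyl group element fixing `λ`
and sending `β` to `θ'`.

Dominance of `λ + θ'` at a simple root `a`: if `⟨λ, a∨⟩ ≥ 1`, it suffices that
`⟨θ', a∨⟩ ≥ -1`, which holds for roots of equal length unless `θ' = -a`, impossible as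
`θ' ⊥ λ`. If `⟨λ, a∨⟩ = 0`, then `a` lies in the parabolic subsystem and `s_a θ'` lies in the
component of `θ'` (through `a` when `⟨θ', a⟩ ≠ 0`), so `θ' - s_a θ' = ⟨θ', a∨⟩ a` is a
nonnegative combination of simple roots.
-/

lemma inner_coroot (v α : V) : ⟪v, coroot α⟫ = 2 / ⟪α, α⟫ * ⟪v, α⟫ :=
  real_inner_smul_right _ _ _

lemma inner_coroot_eq_zero_iff {v α : V} : ⟪v, coroot α⟫ = 0 ↔ ⟪v, α⟫ = 0 := by
  rcases eq_or_ne α 0 with rfl | hα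
  · simp [coroot]
  · rw [inner_coroot, mul_eq_zero,
      or_iff_right (div_ne_zero two_ne_zero (real_inner_self_pos.2 hα).ne')]

lemma inner_self_coroot {α : V} (hα : α ≠ 0) : ⟪α, coroot α⟫ = 2 := by
  rw [inner_coroot]
  field_simp [(real_inner_self_pos.2 hα).ne']

lemma inner_coroot_comm {γ δ : V} (h : ⟪γ, γ⟫ = ⟪δ, δ⟫) :
    ⟪γ, coroot δ⟫ = ⟪δ, coroot γ⟫ := by
  rw [inner_coroot, inner_coroot, h, real_inner_comm δ γ]

lemma neg_one_le_of_inner_coroot_eq {γ δ : V} (hlen : ⟪γ, γ⟫ = ⟪δ, δ⟫) (hδ : δ ≠ 0) {n : ℤ}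
    (hn : ⟪γ, coroot δ⟫ = n) (hne : γ ≠ -δ) : -1 ≤ n := by
  have hδδ : 0 < ⟪δ, δ⟫ := real_inner_self_pos.2 hδ
  have hγδ : ⟪γ, δ⟫ = n * ⟪δ, δ⟫ / 2 := by
    rw [inner_coroot] at hn
    field_simp at hn
    linarith
  -- `|γ + δ|² = (2 + n) |δ|² > 0`
  have hsum : 0 < ⟪γ + δ, γ + δ⟫ :=
    real_inner_self_pos.2 fun h => hne (add_eq_zero_iff_eq_neg.1 h)
  rw [inner_add_left, inner_add_right, inner_add_right, hlen, hγδ, real_inner_comm γ δ,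
    hγδ] at hsum
  have : (-2 : ℝ) < n := by nlinarith
  exact_mod_cast Int.add_one_le_of_lt (by exact_mod_cast this : (-2 : ℤ) < n)

lemma nonneg_of_smul_eq_sum {Δ : Finset V} (hli : LinearIndepOn ℝ id (Δ : Set V)) {a : V}
    (ha : a ∈ Δ) {c : V → ℝ} (hc : ∀ b ∈ Δ, 0 ≤ c b) {r : ℝ} (h : r • a = ∑ b ∈ Δ, c b • b) :
    0 ≤ r := by
  classical
  have hca := linearIndepOn_finset_iffₛ.1 hli c (fun b => if b = a then r else 0)
    (by simp [ite_smul, ha, h]) a ha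
  simpa [hca] using hc a ha

def rootReflection (α : V) : V ≃ₗᵢ[ℝ] V := Submodule.reflection (ℝ ∙ α)ᗮ

lemma rootReflection_apply (α v : V) : rootReflection α v = v - ⟪v, coroot α⟫ • α := by
  rw [rootReflection, Submodule.reflection_orthogonal_apply,
    Submodule.reflection_singleton_apply, coroot, real_inner_smul_right,
    real_inner_self_eq_norm_sq, real_inner_comm]
  simp only [RCLike.ofReal_real_eq_id, id_eq]
  match_scalars <;> ring

lemma rootReflection_mem_weylGroup {Φ : Set V} {α : V} (hα : α ∈ Φ) :
    rootReflection α ∈ weylGroup Φ :=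
  Subgroup.subset_closure ⟨α, hα, rootReflection_apply α⟩

lemma rootReflection_apply_of_inner_eq_zero {α v : V} (h : ⟪v, α⟫ = 0) :
    rootReflection α v = v := by
  rw [rootReflection_apply, inner_coroot_eq_zero_iff.2 h, zero_smul, sub_zero]

lemma rootReflection_apply_mem {Φ : Set V} (hΦ : IsRootSystem Φ) {α v : V} (hα : α ∈ Φ)
    (hv : v ∈ Φ) : rootReflection α v ∈ Φ :=
  rootReflection_apply α v ▸ hΦ.2.2.2.1 α hα v hv

lemma rootReflection_apply_mem_submodule {L : Submodule ℝ V} {α v : V} (hα : α ∈ L)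
    (hv : v ∈ L) : rootReflection α v ∈ L :=
  rootReflection_apply α v ▸ L.sub_mem hv (L.smul_mem _ hα)

lemma inner_rootReflection_self {α : V} (hα : α ≠ 0) (v : V) :
    ⟪rootReflection α v, α⟫ = -⟪v, α⟫ := by
  rw [rootReflection_apply, inner_sub_left, real_inner_smul_left, inner_coroot]
  field_simp [(real_inner_self_pos.2 hα).ne']
  ring

lemma sameComponent_rootReflection {Ψ : Set V} {β x a : V} (hx : sameComponent Ψ β x)
    (hxΨ : x ∈ Ψ) (haΨ : a ∈ Ψ) (hsΨ : rootReflection a x ∈ Ψ) :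
    sameComponent Ψ β (rootReflection a x) := by
  by_cases hxa : ⟪x, a⟫ = 0
  · rwa [rootReflection_apply_of_inner_eq_zero hxa]
  have ha : a ≠ 0 := by rintro rfl; exact hxa (inner_zero_right x)
  refine (hx.tail ⟨hxΨ, haΨ, hxa⟩).tail ⟨haΨ, hsΨ, ?_⟩
  rw [real_inner_comm, inner_rootReflection_self ha]
  exact neg_ne_zero.2 hxa

def ConjFixing (Φ : Set V) (lam γ δ : V) : Prop :=
  ∃ g ∈ weylGroup Φ, g lam = lam ∧ g γ = δ

namespace ConjFixing

variable {Φ : Set V} {lam : V}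

lemma refl (γ : V) : ConjFixing Φ lam γ γ := ⟨1, one_mem _, rfl, rfl⟩

lemma trans {γ δ ε : V} (h₁ : ConjFixing Φ lam γ δ) (h₂ : ConjFixing Φ lam δ ε) :
    ConjFixing Φ lam γ ε := by
  obtain ⟨g, hg, hglam, hgγ⟩ := h₁
  obtain ⟨g', hg', hg'lam, hg'δ⟩ := h₂
  exact ⟨g' * g, mul_mem hg' hg, by simp [hglam, hg'lam], by simp [hgγ, hg'δ]⟩

lemma reflect {α : V} (hα : α ∈ Φ) (hlam : ⟪lam, α⟫ = 0) (γ : V) :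
    ConjFixing Φ lam γ (rootReflection α γ) :=
  ⟨_, rootReflection_mem_weylGroup hα, rootReflection_apply_of_inner_eq_zero hlam, rfl⟩

lemma of_inner_ne_zero (hΦ : IsRootSystem Φ) (hsl : IsSimplyLaced Φ) {γ δ : V} (hγ : γ ∈ Φ)
    (hδ : δ ∈ Φ) (hγlam : ⟪lam, γ⟫ = 0) (hδlam : ⟪lam, δ⟫ = 0) (hγδ : ⟪γ, δ⟫ ≠ 0) :
    ConjFixing Φ lam γ δ := by
  have hγ0 : γ ≠ 0 := fun h => hΦ.2.1 (h ▸ hγ)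
  have hδ0 : δ ≠ 0 := fun h => hΦ.2.1 (h ▸ hδ)
  have sγ := reflect hγ hγlam
  have sδ := reflect hδ hδlam
  have hsδ_neg : rootReflection δ (-δ) = δ := by
    rw [rootReflection_apply, inner_neg_left, inner_self_coroot hδ0]
    module
  rcases eq_or_ne γ δ with rfl | hne
  · exact refl γ
  by_cases hneg : γ = -δ
  · subst hneg
    simpa only [hsδ_neg] using sδ (-δ)
  obtain ⟨n, hn⟩ := hΦ.2.2.2.2.2 δ hδ γ hγ
  have hlen := hsl γ hγ δ hδ
  have hn₁ : -1 ≤ n := neg_one_le_of_inner_coroot_eq hlen hδ0 hn hneg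
  have hn₂ : -1 ≤ -n := neg_one_le_of_inner_coroot_eq (γ := -γ) (by rwa [inner_neg_neg]) hδ0
    (by rw [inner_neg_left, hn]; push_cast; rfl) (neg_injective.ne hne)
  have hn₀ : n ≠ 0 := by
    rintro rfl
    exact hγδ (inner_coroot_eq_zero_iff.1 (by simpa using hn))
  have hn_unit : n = 1 ∨ n = -1 := by omega
  have hsq : (n : ℝ) * n = 1 := by
    rcases hn_unit with rfl | rfl <;> norm_num
  -- `s_γ s_δ γ = (n² - 1) γ - n δ`
  have hsγsδ : rootReflection γ (rootReflection δ γ) = -(n : ℝ) • δ := by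
    rw [rootReflection_apply δ, hn, rootReflection_apply, inner_sub_left, real_inner_smul_left,
      inner_self_coroot hγ0, ← inner_coroot_comm hlen, hn]
    match_scalars
    · linear_combination hsq
    · ring
  have h := (sδ γ).trans (sγ _)
  rw [hsγsδ] at h
  rcases hn_unit with rfl | rfl
  · simpa [hsδ_neg] using h.trans (sδ _)
  · simpa using h

lemma of_sameComponent (hΦ : IsRootSystem Φ) (hsl : IsSimplyLaced Φ) {Ψ : Set V}
    (hΨ : Ψ ⊆ Φ) (hlam : ∀ γ ∈ Ψ, ⟪lam, γ⟫ = 0) {β γ : V} (h : sameComponent Ψ β γ) :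
    ConjFixing Φ lam β γ := by
  induction h with
  | refl => exact refl β
  | tail _ hstep ih =>
    obtain ⟨hx, hy, hxy⟩ := hstep
    exact ih.trans (of_inner_ne_zero hΦ hsl (hΨ hx) (hΨ hy) (hlam _ hx) (hlam _ hy) hxy)

end ConjFixing

lemma inner_coroot_nonneg_of_highest {Δ : Finset V} (hli : LinearIndepOn ℝ id (Δ : Set V))
    {a θ : V} (ha : a ∈ Δ) {C : Set V}
    (hθ : ∀ γ ∈ C, ∃ c : V → ℝ, (∀ b ∈ Δ, 0 ≤ c b) ∧ θ - γ = ∑ b ∈ Δ, c b • b)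
    (hsC : rootReflection a θ ∈ C) :
    0 ≤ ⟪θ, coroot a⟫ := by
  obtain ⟨c, hc, hsum⟩ := hθ _ hsC
  rw [rootReflection_apply, sub_sub_cancel] at hsum
  exact nonneg_of_smul_eq_sum hli ha hc hsum

lemma inner_add_coroot_nonneg_of_pos {Φ : Set V} (hΦ : IsRootSystem Φ) (hsl : IsSimplyLaced Φ)
    {lam θ a : V} (hlam : lam ∈ weightLattice Φ) (hθ : θ ∈ Φ) (ha : a ∈ Φ)
    (hθlam : ⟪lam, θ⟫ = 0) (hpos : 0 < ⟪lam, coroot a⟫) : 0 ≤ ⟪lam + θ, coroot a⟫ := by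
  obtain ⟨m, hm⟩ := hlam a ha
  obtain ⟨n, hn⟩ := hΦ.2.2.2.2.2 a ha θ hθ
  have hθa : θ ≠ -a := by
    rintro rfl
    rw [inner_neg_right, neg_eq_zero, ← inner_coroot_eq_zero_iff] at hθlam
    exact hpos.ne' hθlam
  have hn₁ := neg_one_le_of_inner_coroot_eq (hsl θ hθ a ha) (fun h => hΦ.2.1 (h ▸ ha)) hn hθa
  have hm₁ : 0 < m := by exact_mod_cast hm ▸ hpos
  rw [inner_add_left, hm, hn]
  exact_mod_cast (by omega : 0 ≤ m + n)

theorem simply_laced_dominant_fire_general (Φ Φp Δ : Finset V)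
    (hΦ : IsRootSystem (Φ : Set V)) (hp : IsPositiveSystem (Φ : Set V) (Φp : Set V))
    (hΔ : IsSimpleSystem (Φp : Set V) Δ)
    (hsl : IsSimplyLaced (Φ : Set V))
    (lam : V) (hlam : lam ∈ weightLattice (Φ : Set V))
    (hdom : IsDominant (Δ : Set V) lam)
    (β : V)
    -- the parabolic sub-root system `Φ_{I⁰_λ}` and the irreducible component of `β` in it
    (parab comp : Set V)
    (hparab : parab = {γ | γ ∈ (Φ : Set V) ∧
      γ ∈ (Submodule.span ℝ {a : V | a ∈ Δ ∧ ⟪lam, coroot a⟫ = 0} : Submodule ℝ V)})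
    (hcomp : comp = {γ | γ ∈ parab ∧ sameComponent parab β γ})
    -- `θ'` is the highest root of that component
    (θ' : V) (hθmem : θ' ∈ comp)
    (hθhigh : ∀ γ ∈ comp, ∃ c : V → ℝ, (∀ a ∈ Δ, 0 ≤ c a) ∧ θ' - γ = ∑ a ∈ Δ, c a • a) :
    IsDominant (Δ : Set V) (lam + θ') ∧ sameOrbit (Φ : Set V) (lam + β) (lam + θ') := by
  subst hparab hcomp
  have hΔΦ : ∀ a ∈ Δ, a ∈ (Φ : Set V) := fun a ha => hp.1 (hΔ.1 ha)
  set L := Submodule.span ℝ {a : V | a ∈ Δ ∧ ⟪lam, coroot a⟫ = 0}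
  have hL : L ≤ (ℝ ∙ lam)ᗮ := Submodule.span_le.2 fun a ha =>
    Submodule.mem_orthogonal_singleton_iff_inner_right.2 (inner_coroot_eq_zero_iff.1 ha.2)
  have hL_lam : ∀ γ ∈ L, ⟪lam, γ⟫ = 0 := fun γ hγ =>
    Submodule.mem_orthogonal_singleton_iff_inner_right.1 (hL hγ)
  obtain ⟨⟨hθΦ, hθL⟩, hβθ⟩ := hθmem
  refine ⟨fun a ha => ?_, ?_⟩
  · rcases (hdom a ha).eq_or_lt with hzero | hpos
    · have haL : a ∈ L := Submodule.subset_span ⟨ha, hzero.symm⟩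
      have hsΦ := rootReflection_apply_mem hΦ (hΔΦ a ha) hθΦ
      have hsL := rootReflection_apply_mem_submodule haL hθL
      rw [inner_add_left, ← hzero, zero_add]
      exact inner_coroot_nonneg_of_highest hΔ.2.1 ha hθhigh
        ⟨⟨hsΦ, hsL⟩, sameComponent_rootReflection hβθ ⟨hθΦ, hθL⟩ ⟨hΔΦ a ha, haL⟩ ⟨hsΦ, hsL⟩⟩
    · exact inner_add_coroot_nonneg_of_pos hΦ hsl hlam hθΦ (hΔΦ a ha) (hL_lam θ' hθL) hpos
  · obtain ⟨g, hg, hglam, hgβ⟩ :=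
      ConjFixing.of_sameComponent hΦ hsl (fun γ hγ => hγ.1) (fun γ hγ => hL_lam γ hγ.2) hβθ
    exact ⟨g, hg, by rw [map_add, hglam, hgβ]⟩

/-- in a simply laced root system, if `λ` is dominant and `λ → λ + β` is a
central-firing move, and `θ'` is the highest root of the irreducible component containing `β`
of the parabolic sub-root system `Φ ∩ Span{αᵢ : ⟨λ, αᵢ∨⟩ = 0}`, then `λ + θ'` is dominant
and lies in the Weyl orbit of `λ + β`. -/
theorem simply_laced_dominant_fire (Φ Φp Δ : Finset V)
    (hΦ : IsRootSystem (Φ : Set V)) (hp : IsPositiveSystem (Φ : Set V) (Φp : Set V))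
    (hΔ : IsSimpleSystem (Φp : Set V) Δ)
    (hsl : IsSimplyLaced (Φ : Set V)) (hirr : IsIrreducibleRS (Φ : Set V))
    (lam : V) (hlam : lam ∈ weightLattice (Φ : Set V))
    (hdom : IsDominant (Δ : Set V) lam)
    (β : V) (hβ : β ∈ Φp) (horth : ⟪lam, coroot β⟫ = 0)
    -- the parabolic sub-root system `Φ_{I⁰_λ}` and the irreducible component of `β` in it
    (parab comp : Set V)
    (hparab : parab = {γ | γ ∈ (Φ : Set V) ∧
      γ ∈ (Submodule.span ℝ {a : V | a ∈ Δ ∧ ⟪lam, coroot a⟫ = 0} : Submodule ℝ V)})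
    (hcomp : comp = {γ | γ ∈ parab ∧ sameComponent parab β γ})
    -- `θ'` is the highest root of that component
    (θ' : V) (hθmem : θ' ∈ comp)
    (hθhigh : ∀ γ ∈ comp, ∃ c : V → ℝ, (∀ a ∈ Δ, 0 ≤ c a) ∧ θ' - γ = ∑ a ∈ Δ, c a • a) :
    IsDominant (Δ : Set V) (lam + θ') ∧ sameOrbit (Φ : Set V) (lam + β) (lam + θ') :=
  simply_laced_dominant_fire_general Φ Φp Δ hΦ hp hΔ hsl lam hlam hdom β parab comp hparab hcomp θ'
    hθmem hθhigh

end CF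
end
end

section
/- The firing span is Weyl-equivariant and independent of the sign condition: for any weight λ, the span FS_{Φ⁺}(λ) := Span_ℝ{μ − λ : λ →* μ via positive-root central-firing} equals FS_Φ(λ) := Span_ℝ{μ − λ : λ →* μ via all-root central-firing}, and moreover FS_{Φ⁺}(wλ) = w·FS_{Φ⁺}(λ) for every Weyl group element w. -/
open scoped RealInnerProductSpace

noncomputable section

namespace CF

variable {V : Type*} [NormedAddCommGroup V] [InnerProductSpace ℝ V]

/-!
Follow an all-root firing sequence `λ →* μ` alongside a positive-root one `λ →* g μ`, where `g`
is a product of reflections `s_γ` in roots `γ` of `U = FS_{Φ⁺}(λ)`. A firing `ν → ν + β` with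
`g β = -γ` negative becomes, after one more reflection `s_γ`, the positive firing
`g ν → g ν + γ`, which in turn shows `γ ∈ U`. Each `s_γ` with `γ ∈ U` moves vectors only along
`U`, so `μ - λ = (g μ - λ) - (g μ - μ) ∈ U`. For all-root firing, equivariance is immediate
because `W` permutes `Φ` and preserves `⟨·, α∨⟩`.
-/

lemma coroot_neg (α : V) : coroot (-α) = -coroot α := by
  simp [coroot, smul_neg]

lemma inner_coroot_map (g : V →ₗᵢ[ℝ] V) (x α : V) :
    ⟪g x, coroot (g α)⟫ = ⟪x, coroot α⟫ := by
  simp only [coroot, real_inner_smul_right, g.inner_map_map]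

lemma reflection_orthogonal_singleton_apply (γ v : V) :
    (ℝ ∙ γ)ᗮ.reflection v = v - ⟪v, coroot γ⟫ • γ := by
  rw [Submodule.reflection_orthogonal_apply, Submodule.reflection_singleton_apply, coroot,
    real_inner_smul_right, real_inner_self_eq_norm_sq, real_inner_comm]
  simp only [RCLike.ofReal_real_eq_id, id_eq]
  module

lemma reflection_orthogonal_singleton_sub_self (γ v : V) :
    (ℝ ∙ γ)ᗮ.reflection v - v = -⟪v, coroot γ⟫ • γ := by
  rw [reflection_orthogonal_singleton_apply]
  module

lemma reflection_orthogonal_singleton_sub {γ x : V} (hx : ⟪x, coroot γ⟫ = 0) :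
    (ℝ ∙ γ)ᗮ.reflection (x - γ) = x + γ := by
  rw [reflection_orthogonal_singleton_apply, inner_sub_left, hx, zero_sub]
  rcases eq_or_ne γ 0 with rfl | hγ
  · simp
  · have : ⟪γ, coroot γ⟫ = 2 := by
      rw [coroot, real_inner_smul_right]
      field_simp [inner_self_ne_zero.mpr hγ]
    rw [this]
    module

lemma weylGroup_eq_closure_reflection (Φ : Set V) :
    weylGroup Φ = Subgroup.closure ((fun γ => (ℝ ∙ γ)ᗮ.reflection) '' Φ) := by
  refine congrArg Subgroup.closure (Set.ext fun g => ⟨?_, ?_⟩)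
  · rintro ⟨α, hα, hg⟩
    refine ⟨α, hα, LinearIsometryEquiv.ext fun v => ?_⟩
    rw [hg, reflection_orthogonal_singleton_apply]
  · rintro ⟨α, hα, rfl⟩
    exact ⟨α, hα, reflection_orthogonal_singleton_apply α⟩

lemma reflection_mem_weylGroup {Φ : Set V} {γ : V} (hγ : γ ∈ Φ) :
    (ℝ ∙ γ)ᗮ.reflection ∈ weylGroup Φ := by
  rw [weylGroup_eq_closure_reflection]
  exact Subgroup.subset_closure ⟨γ, hγ, rfl⟩

lemma mapsTo_of_mem_weylGroup {Φ : Set V}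
    (hΦ : ∀ α ∈ Φ, ∀ β ∈ Φ, β - ⟪β, coroot α⟫ • α ∈ Φ) {g : V ≃ₗᵢ[ℝ] V}
    (hg : g ∈ weylGroup Φ) : Set.MapsTo g Φ Φ := by
  have reflection_mapsTo : ∀ α ∈ Φ, Set.MapsTo (ℝ ∙ α)ᗮ.reflection Φ Φ := fun α hα β hβ => by
    rw [reflection_orthogonal_singleton_apply]
    exact hΦ α hα β hβ
  rw [weylGroup_eq_closure_reflection] at hg
  induction hg using Subgroup.closure_induction'' with
  | mem _ h => obtain ⟨α, hα, rfl⟩ := h; exact reflection_mapsTo α hα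
  | inv_mem _ h =>
    obtain ⟨α, hα, rfl⟩ := h
    rw [Submodule.reflection_inv]
    exact reflection_mapsTo α hα
  | one => exact Set.mapsTo_id Φ
  | mul _ _ _ _ hg hh => exact hg.comp hh

section Firing

variable {S T : Set V}

lemma fire_mono (hST : S ⊆ T) : fire S ≤ fire T := fun _ _ ⟨α, hα, h⟩ => ⟨α, hST hα, h⟩

lemma firingSpan_mono (hST : S ⊆ T) (lam : V) : firingSpan S lam ≤ firingSpan T lam :=
  Submodule.span_mono fun _ ⟨mu, h, hd⟩ =>
    ⟨mu, Relation.ReflTransGen.mono (fire_mono hST) _ _ h, hd⟩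

lemma sub_mem_firingSpan {lam mu : V} (h : Relation.ReflTransGen (fire S) lam mu) :
    mu - lam ∈ firingSpan S lam :=
  Submodule.subset_span ⟨mu, h, rfl⟩

lemma mem_firingSpan_of_fire {lam mu α : V} (h : Relation.ReflTransGen (fire S) lam mu)
    (hα : fire S mu (mu + α)) : α ∈ firingSpan S lam := by
  have h' := Submodule.sub_mem _ (sub_mem_firingSpan (h.tail hα)) (sub_mem_firingSpan h)
  rwa [sub_sub_sub_cancel_right, add_sub_cancel_left] at h'

lemma fire_map {g : V ≃ₗᵢ[ℝ] V} (hg : Set.MapsTo g S S) {x y : V} (h : fire S x y) :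
    fire S (g x) (g y) := by
  obtain ⟨α, hα, hx, rfl⟩ := h
  exact ⟨g α, hg hα, by rwa [← g.coe_toLinearIsometry, inner_coroot_map], map_add g x α⟩

lemma map_firingSpan_le {g : V ≃ₗᵢ[ℝ] V} (hg : Set.MapsTo g S S) (lam : V) :
    (firingSpan S lam).map g.toLinearEquiv.toLinearMap ≤ firingSpan S (g lam) := by
  rw [firingSpan, Submodule.map_span, Submodule.span_le]
  rintro _ ⟨_, ⟨mu, h, rfl⟩, rfl⟩
  exact Submodule.subset_span ⟨g mu, h.lift g fun _ _ => fire_map hg, by simp⟩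

end Firing

lemma firingSpan_weylGroup_apply {Φ : Set V}
    (hΦ : ∀ α ∈ Φ, ∀ β ∈ Φ, β - ⟪β, coroot α⟫ • α ∈ Φ) {g : V ≃ₗᵢ[ℝ] V}
    (hg : g ∈ weylGroup Φ) (lam : V) :
    firingSpan Φ (g lam) = (firingSpan Φ lam).map g.toLinearEquiv.toLinearMap := by
  refine le_antisymm (fun x hx => ⟨g⁻¹ x, ?_, by simp⟩)
    (map_firingSpan_le (mapsTo_of_mem_weylGroup hΦ hg) lam)
  simpa using map_firingSpan_le (mapsTo_of_mem_weylGroup hΦ (inv_mem hg)) (g lam) ⟨x, hx, rfl⟩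

section PositiveRoots

variable {Φ Φp : Set V}

lemma exists_mem_weylGroup_reflTransGen_fire (hsub : Φp ⊆ Φ)
    (hsign : ∀ α ∈ Φ, α ∈ Φp ∨ -α ∈ Φp) (hΦ : ∀ α ∈ Φ, ∀ β ∈ Φ, β - ⟪β, coroot α⟫ • α ∈ Φ)
    {lam mu : V} (h : Relation.ReflTransGen (fire Φ) lam mu) :
    ∃ g ∈ weylGroup Φ, (∀ x, g x - x ∈ firingSpan Φp lam) ∧
      Relation.ReflTransGen (fire Φp) lam (g mu) := by
  induction h with
  | refl => exact ⟨1, one_mem _, fun x => by simp, .refl⟩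
  | @tail nu _ _ hstep ih =>
    obtain ⟨g, hgW, hgU, hreach⟩ := ih
    obtain ⟨β, hβ, hperp, rfl⟩ := hstep
    have hperp' : ⟪g nu, coroot (g β)⟫ = 0 := by
      rwa [← g.coe_toLinearIsometry, inner_coroot_map]
    rcases hsign (g β) (mapsTo_of_mem_weylGroup hΦ hgW hβ) with hpos | hneg
    · exact ⟨g, hgW, hgU, by rw [map_add]; exact hreach.tail ⟨g β, hpos, hperp', rfl⟩⟩
    set γ := -g β with hγ
    have hperpγ : ⟪g nu, coroot γ⟫ = 0 := by rw [coroot_neg, inner_neg_right, hperp', neg_zero]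
    have hfire : fire Φp (g nu) (g nu + γ) := ⟨γ, hneg, hperpγ, rfl⟩
    have hγU : γ ∈ firingSpan Φp lam := mem_firingSpan_of_fire hreach hfire
    refine ⟨(ℝ ∙ γ)ᗮ.reflection * g, mul_mem (reflection_mem_weylGroup (hsub hneg)) hgW,
      fun x => ?_, ?_⟩
    · rw [LinearIsometryEquiv.coe_mul, Function.comp_apply, ← sub_add_sub_cancel _ (g x),
        reflection_orthogonal_singleton_sub_self]
      exact add_mem (Submodule.smul_mem _ _ hγU) (hgU x)
    · rw [LinearIsometryEquiv.coe_mul, Function.comp_apply, map_add,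
        show g β = -γ by rw [hγ, neg_neg], ← sub_eq_add_neg,
        reflection_orthogonal_singleton_sub hperpγ]
      exact hreach.tail hfire

lemma firingSpan_eq_firingSpan_of_positive (hsub : Φp ⊆ Φ)
    (hsign : ∀ α ∈ Φ, α ∈ Φp ∨ -α ∈ Φp) (hΦ : ∀ α ∈ Φ, ∀ β ∈ Φ, β - ⟪β, coroot α⟫ • α ∈ Φ)
    (lam : V) : firingSpan Φp lam = firingSpan Φ lam := by
  refine le_antisymm (firingSpan_mono hsub lam) (Submodule.span_le.mpr ?_)
  rintro _ ⟨mu, h, rfl⟩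
  obtain ⟨g, -, hgU, hreach⟩ := exists_mem_weylGroup_reflTransGen_fire hsub hsign hΦ h
  rw [SetLike.mem_coe, ← sub_sub_sub_cancel_left lam mu (g mu)]
  exact sub_mem (sub_mem_firingSpan hreach) (hgU mu)

end PositiveRoots

theorem firingSpan_all_and_equivariant_general (Φ Φp : Finset V)
    (hΦ : IsRootSystem (Φ : Set V)) (hp : IsPositiveSystem (Φ : Set V) (Φp : Set V))
    (lam : V) :
    firingSpan (Φp : Set V) lam = firingSpan (Φ : Set V) lam ∧
      ∀ g ∈ weylGroup (Φ : Set V),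
        firingSpan (Φp : Set V) (g lam) =
          Submodule.map g.toLinearEquiv.toLinearMap (firingSpan (Φp : Set V) lam) := by
  have hrefl := hΦ.2.2.2.1
  have hspan : ∀ ν, firingSpan (Φp : Set V) ν = firingSpan (Φ : Set V) ν :=
    firingSpan_eq_firingSpan_of_positive hp.1 (fun α hα => (hp.2.1 α hα).1) hrefl
  refine ⟨hspan lam, fun g hg => ?_⟩
  rw [hspan, hspan]
  exact firingSpan_weylGroup_apply hrefl hg lam

/-- the firing span of the positive roots equals the firing span of all roots,
and the firing span is Weyl-equivariant. -/
theorem firingSpan_all_and_equivariant (Φ Φp : Finset V)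
    (hΦ : IsRootSystem (Φ : Set V)) (hp : IsPositiveSystem (Φ : Set V) (Φp : Set V))
    (lam : V) (hlam : lam ∈ weightLattice (Φ : Set V)) :
    firingSpan (Φp : Set V) lam = firingSpan (Φ : Set V) lam ∧
      ∀ g ∈ weylGroup (Φ : Set V),
        firingSpan (Φp : Set V) (g lam) =
          Submodule.map g.toLinearEquiv.toLinearMap (firingSpan (Φp : Set V) lam) :=
  firingSpan_all_and_equivariant_general Φ Φp hΦ hp lam

end CF
end
end

section
/- Unlabeled chip-firing stabilization for connected configurations: let v ∈ ℤ^N be weakly decreasing (an unlabeled chip configuration) and let v~ be its pseudo-stabilization, the unique weakly decreasing vector with all entries distinct, at most one 'gap' (at most one integer t with v~_N < t < v~_1 not among the entries), and the same coordinate sum as v. If for all 1 ≤ i < N the strict inequality v₁ + ⋯ + vᵢ < v~₁ + ⋯ + v~ᵢ holds, then every maximal sequence of unlabeled chip-firing moves (replacing two equal entries v_i = v_j by v_i + 1, v_j − 1 and re-sorting) starting from v terminates at v~. -/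
/-!
Call a multiset of chips dominated by `b : ℕ → ℤ` if every `k` of its chips sum to at most
`b k`. With `b k = vt 0 + ⋯ + vt (k - 1)`, the initial configuration is dominated (it is sorted
and its partial sums are below those of `vt`), and firing preserves domination because the
partial sums of the strictly decreasing `vt` are strictly concave. A stable configuration is a
strictly decreasing `w` dominated by `vt` with the same total. If `w ≠ vt`, there are `p < q`
with `w p < vt p` and `vt q < w q`, so `vt` drops by at least `q - p + 2` from `p` to `q`:
two gaps.
-/

namespace CF

/-- One unlabeled chip-firing move on a multiset of chip positions: two chips at the same
position `a` move to `a + 1` and `a − 1`. -/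
def chipStep (M M' : Multiset ℤ) : Prop :=
  ∃ a : ℤ, ∃ R : Multiset ℤ, M = a ::ₘ a ::ₘ R ∧ M' = (a + 1) ::ₘ (a - 1) ::ₘ R

end CF

theorem Multiset.exists_le_map_eq_of_le_map {α β : Type*} {f : α → β} {S : Multiset β}
    {M : Multiset α} (h : S ≤ M.map f) : ∃ T ≤ M, T.map f = S := by
  induction M using Quot.inductionOn
  induction S using Quot.inductionOn
  obtain ⟨l, hperm, hsub⟩ := Multiset.coe_le.1 h
  obtain ⟨T, hT, rfl⟩ := List.sublist_map_iff.1 hsub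
  exact ⟨T, Multiset.coe_le.2 hT.subperm, Multiset.coe_eq_coe.2 hperm⟩

theorem Multiset.exists_strictAnti_of_nodup {α : Type*} [LinearOrder α] {M : Multiset α}
    {k : ℕ} (hM : M.Nodup) (hk : card M = k) :
    ∃ w : Fin k → α, StrictAnti w ∧ M = Finset.univ.val.map w := by
  have hs : M.toFinset.card = k := (toFinset_card_of_nodup hM).trans hk
  set e := M.toFinset.orderEmbOfFin hs
  refine ⟨e ∘ Fin.rev, e.strictMono.comp_strictAnti Fin.rev_strictAnti, ?_⟩
  rw [← map_map, show map Fin.rev Finset.univ.val = _ from map_univ_val_equiv Fin.revPerm]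
  conv_lhs => rw [← hM.dedup, ← toFinset_val, ← Finset.image_orderEmbOfFin_univ _ hs]
  exact Finset.image_val_of_injOn e.injective.injOn

namespace CF

open Finset

section PartialSum

variable {n : ℕ}

def partialSum (g : Fin n → ℤ) (k : ℕ) : ℤ :=
  ∑ i : Fin n, if (i : ℕ) < k then g i else 0

lemma partialSum_succ (g : Fin n → ℤ) {k : ℕ} (hk : k < n) :
    partialSum g (k + 1) = partialSum g k + g ⟨k, hk⟩ := by
  rw [partialSum, partialSum, ← sum_ite_eq_of_mem' univ ⟨k, hk⟩ g (mem_univ _),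
    ← sum_add_distrib]
  refine sum_congr rfl fun i _ => ?_
  simp only [Fin.ext_iff]
  split_ifs <;> omega

lemma partialSum_of_le (g : Fin n → ℤ) {k : ℕ} (hk : n ≤ k) : partialSum g k = ∑ i, g i :=
  sum_congr rfl fun i _ => if_pos (i.isLt.trans_le hk)

lemma partialSum_min (g : Fin n → ℤ) (k : ℕ) : partialSum g (min n k) = partialSum g k := by
  simp only [partialSum, lt_min_iff, Fin.is_lt, true_and]

lemma partialSum_congr {f g : Fin n → ℤ} {k : ℕ} (h : ∀ i : Fin n, (i : ℕ) < k → f i = g i) :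
    partialSum f k = partialSum g k :=
  sum_congr rfl fun i _ => by split_ifs with hi <;> simp [h i, hi]

lemma partialSum_add_two_sub_lt {g : Fin n → ℤ} (hg : StrictAnti g) {m : ℕ} (hm : m + 2 ≤ n) :
    partialSum g (m + 2) - partialSum g (m + 1) < partialSum g (m + 1) - partialSum g m := by
  rw [partialSum_succ g (by omega : m + 1 < n), partialSum_succ g (by omega : m < n)]
  linarith [hg (show (⟨m, by omega⟩ : Fin n) < ⟨m + 1, by omega⟩ from Nat.lt_succ_self m)]

lemma sum_le_partialSum {v : Fin n → ℤ} (hv : Antitone v) (T : Finset (Fin n)) :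
    ∑ i ∈ T, v i ≤ partialSum v #T := by
  induction T using Finset.induction_on_max with
  | empty => simp [partialSum]
  | insert a T hlt ih =>
    have haT : a ∉ T := fun h => lt_irrefl a (hlt a h)
    have hcard : #T ≤ a := by
      simpa using card_le_card (fun x hx => mem_Iio.2 (hlt x hx) : T ⊆ Iio a)
    rw [sum_insert haT, card_insert_of_notMem haT, partialSum_succ v (hcard.trans_lt a.isLt)]
    linarith [hv (show (⟨#T, hcard.trans_lt a.isLt⟩ : Fin n) ≤ a from hcard)]

end PartialSum

section Dominated

def Dominated (b : ℕ → ℤ) (M : Multiset ℤ) : Prop :=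
  ∀ S ≤ M, S.sum ≤ b (Multiset.card S)

variable {b b' : ℕ → ℤ} {M M' : Multiset ℤ}

lemma Dominated.mono (h : Dominated b M) (hb : ∀ k, b k ≤ b' k) : Dominated b' M :=
  fun S hS => (h S hS).trans (hb _)

lemma chipStep.card_eq (h : chipStep M M') : Multiset.card M' = Multiset.card M := by
  obtain ⟨a, R, rfl, rfl⟩ := h
  simp

lemma chipStep.sum_eq (h : chipStep M M') : M'.sum = M.sum := by
  obtain ⟨a, R, rfl, rfl⟩ := h
  simp only [Multiset.sum_cons]
  ring

lemma card_eq_and_sum_eq_of_reflTransGen (h : Relation.ReflTransGen chipStep M M') :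
    Multiset.card M' = Multiset.card M ∧ M'.sum = M.sum := by
  induction h with
  | refl => exact ⟨rfl, rfl⟩
  | tail _ hstep ih => exact ⟨hstep.card_eq.trans ih.1, hstep.sum_eq.trans ih.2⟩

/-- Only a sub-multiset `(a + 1) :: T` with `T ≤ R` can break the bound after firing; there
the bounds for `T`, `a :: T` and `a :: a :: T` contradict the strict concavity of `b`. -/
lemma Dominated.of_chipStep (h : Dominated b M) (hstep : chipStep M M')
    (hb : ∀ m, m + 2 ≤ Multiset.card M → b (m + 2) - b (m + 1) < b (m + 1) - b m) :
    Dominated b M' := by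
  obtain ⟨a, R, rfl, rfl⟩ := hstep
  intro S hS
  have hle₁ : ∀ {T}, T ≤ R → T ≤ a ::ₘ a ::ₘ R := fun hT =>
    (hT.trans (Multiset.le_cons_self _ _)).trans (Multiset.le_cons_self _ _)
  have hle₂ : ∀ {T}, T ≤ R → a ::ₘ T ≤ a ::ₘ a ::ₘ R := fun hT =>
    Multiset.cons_le_cons _ (hT.trans (Multiset.le_cons_self _ _))
  have hle₃ : ∀ {T}, T ≤ R → a ::ₘ a ::ₘ T ≤ a ::ₘ a ::ₘ R := fun hT =>
    Multiset.cons_le_cons _ (Multiset.cons_le_cons _ hT)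
  by_cases h₁ : a + 1 ∈ S
  · obtain ⟨T, rfl⟩ := Multiset.exists_cons_of_mem h₁
    rw [Multiset.cons_le_cons_iff] at hS
    by_cases h₂ : a - 1 ∈ T
    · obtain ⟨U, rfl⟩ := Multiset.exists_cons_of_mem h₂
      rw [Multiset.cons_le_cons_iff] at hS
      have hU := h _ (hle₃ hS)
      simp only [Multiset.sum_cons, Multiset.card_cons] at hU ⊢
      linarith
    · rw [Multiset.le_cons_of_notMem h₂] at hS
      have h₀ := h _ (hle₁ hS)
      have h₁ := h _ (hle₂ hS)
      have h₂ := h _ (hle₃ hS)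
      have hconc := hb _ (by simpa using Multiset.card_le_card (hle₃ hS))
      simp only [Multiset.sum_cons, Multiset.card_cons, add_assoc, Nat.reduceAdd] at h₁ h₂ ⊢
      omega
  · rw [Multiset.le_cons_of_notMem h₁] at hS
    by_cases h₂ : a - 1 ∈ S
    · obtain ⟨T, rfl⟩ := Multiset.exists_cons_of_mem h₂
      rw [Multiset.cons_le_cons_iff] at hS
      have hT := h _ (hle₂ hS)
      simp only [Multiset.sum_cons, Multiset.card_cons] at hT ⊢
      linarith
    · exact h S (hle₁ ((Multiset.le_cons_of_notMem h₂).1 hS))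

lemma Dominated.of_reflTransGen (h : Dominated b M) (hreach : Relation.ReflTransGen chipStep M M')
    (hb : ∀ m, m + 2 ≤ Multiset.card M → b (m + 2) - b (m + 1) < b (m + 1) - b m) :
    Dominated b M' := by
  induction hreach with
  | refl => exact h
  | tail hreach hstep ih =>
    exact ih.of_chipStep hstep fun m hm => hb m (hm.trans
      (card_eq_and_sum_eq_of_reflTransGen hreach).1.le)

lemma nodup_of_not_exists_chipStep (h : ¬ ∃ M', chipStep M M') : M.Nodup := by
  refine Multiset.nodup_iff_count_le_one.2 fun a => not_lt.1 fun ha => h ?_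
  obtain ⟨R, hR⟩ := Multiset.le_iff_exists_add.1
    (Multiset.le_count_iff_replicate_le.1 (ha : 2 ≤ M.count a))
  exact ⟨(a + 1) ::ₘ (a - 1) ::ₘ R, a, R, by simp [hR, Multiset.replicate_succ], rfl⟩

variable {n : ℕ}

lemma dominated_map_univ {v : Fin n → ℤ} (hv : Antitone v) :
    Dominated (partialSum v) (univ.val.map v) := by
  intro S hS
  obtain ⟨T, hT, rfl⟩ := Multiset.exists_le_map_eq_of_le_map hS
  have hT' : T.Nodup := Multiset.nodup_of_le hT univ.nodup
  simpa using sum_le_partialSum hv ⟨T, hT'⟩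

lemma Dominated.partialSum_le {w : Fin n → ℤ} (h : Dominated b (univ.val.map w)) (k : ℕ) :
    partialSum w k ≤ b (min n k) := by
  have hsub := h ((univ.filter fun i : Fin n => (i : ℕ) < k).val.map w)
    (Multiset.map_le_map (Multiset.filter_le _ _))
  rwa [Multiset.card_map, ← Finset.card_def, Fin.card_filter_val_lt, ← Finset.sum_eq_multiset_sum,
    sum_filter] at hsub

end Dominated

section Rigidity

variable {n : ℕ}

def gaps (g : Fin (n + 1) → ℤ) : Set ℤ :=
  {t | g (Fin.last n) < t ∧ t < g 0 ∧ ∀ i, g i ≠ t}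

lemma antitone_add_val {f : Fin (n + 1) → ℤ} (hf : StrictAnti f) :
    Antitone fun i => f i + (i : ℕ) := by
  refine Fin.antitone_iff_succ_le.2 fun i => ?_
  have := hf (Fin.castSucc_lt_succ (i := i))
  simp only [Fin.val_succ, Fin.val_castSucc]
  omega

lemma sub_le_of_gaps_subsingleton {g : Fin (n + 1) → ℤ}
    (hgap : (gaps g).Subsingleton) : g 0 - g (Fin.last n) ≤ n + 1 := by
  set G := Icc (g (Fin.last n)) (g 0) \ univ.image g
  have hG : ∀ t ∈ G, t ∈ gaps g := by
    intro t ht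
    simp only [G, mem_sdiff, mem_Icc, mem_image, mem_univ, true_and, not_exists] at ht
    obtain ⟨⟨hlo, hhi⟩, hne⟩ := ht
    exact ⟨hlo.lt_of_ne (hne _), hhi.lt_of_ne (Ne.symm (hne _)), hne⟩
  have hGcard : #G ≤ 1 := card_le_one.2 fun s hs t ht => hgap (hG s hs) (hG t ht)
  have himage : #(univ.image g) ≤ n + 1 := by simpa using card_image_le (s := univ) (f := g)
  have hIcc : #(Icc (g (Fin.last n)) (g 0)) ≤ #G + #(univ.image g) :=
    card_le_card_sdiff_add_card
  rw [Int.card_Icc] at hIcc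
  omega

lemma exists_lt_lt_of_partialSum_le {f g : Fin (n + 1) → ℤ}
    (hle : ∀ k, partialSum f k ≤ partialSum g k) (hsum : ∑ i, f i = ∑ i, g i) (hne : f ≠ g) :
    ∃ p q, p < q ∧ f p < g p ∧ g q < f q := by
  obtain ⟨p, hp, hmin⟩ := WellFounded.has_min wellFounded_lt {i | f i ≠ g i}
    (Function.ne_iff.1 hne)
  have hagree : ∀ i, i < p → f i = g i := fun i hi => not_not.1 fun h => hmin i h hi
  have hfp : f p < g p := by
    have := hle ((p : ℕ) + 1)
    rw [partialSum_succ f p.isLt, partialSum_succ g p.isLt,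
      partialSum_congr hagree] at this
    exact lt_of_le_of_ne (by simpa using this) hp
  obtain ⟨q, hq⟩ : ∃ q, g q < f q := by
    by_contra! hfg
    exact (sum_lt_sum (fun i _ => hfg i) ⟨p, mem_univ _, hfp⟩).ne hsum
  refine ⟨p, q, lt_of_not_ge fun hqp => ?_, hfp, hq⟩
  rcases hqp.lt_or_eq with hqp | rfl
  · exact hq.ne' (hagree q hqp)
  · exact hq.not_gt hfp

lemma eq_of_partialSum_le {w g : Fin (n + 1) → ℤ} (hw : StrictAnti w) (hg : StrictAnti g)
    (hgap : (gaps g).Subsingleton) (hle : ∀ k, partialSum w k ≤ partialSum g k)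
    (hsum : ∑ i, w i = ∑ i, g i) : w = g := by
  by_contra hne
  obtain ⟨p, q, hpq, hp, hq⟩ := exists_lt_lt_of_partialSum_le hle hsum hne
  have hwpq := antitone_add_val hw hpq.le
  have hg0p := antitone_add_val hg (Fin.zero_le p)
  have hgqn := antitone_add_val hg (Fin.le_last q)
  have hspread := sub_le_of_gaps_subsingleton hgap
  simp only [Fin.val_zero, Fin.val_last, Nat.cast_zero, add_zero] at hwpq hg0p hgqn
  omega

end Rigidity

/-- unlabeled chip-firing stabilization for connected configurations.
Let `v` be a weakly decreasing configuration of `n + 1` chips and `v~` its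
pseudo-stabilization (strictly decreasing, at most one gap, same sum).  If all proper
partial sums of `v` are strictly smaller than those of `v~`, then every maximal chip-firing
sequence from `v` terminates at `v~`. -/
theorem chip_stabilization (n : ℕ) (v vt : Fin (n + 1) → ℤ)
    (hv : ∀ i j : Fin (n + 1), i ≤ j → v j ≤ v i)
    (hvt : StrictAnti vt)
    (hsum : ∑ i, v i = ∑ i, vt i)
    (hgap : ∀ t₁ t₂ : ℤ,
      (vt (Fin.last n) < t₁ ∧ t₁ < vt 0 ∧ ∀ i, vt i ≠ t₁) →
      (vt (Fin.last n) < t₂ ∧ t₂ < vt 0 ∧ ∀ i, vt i ≠ t₂) → t₁ = t₂)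
    (hstrict : ∀ i : ℕ, 1 ≤ i → i < n + 1 →
      (∑ k : Fin (n + 1), if (k : ℕ) < i then v k else 0) <
      (∑ k : Fin (n + 1), if (k : ℕ) < i then vt k else 0))
    (M : Multiset ℤ)
    (hreach : Relation.ReflTransGen chipStep (Finset.univ.val.map v) M)
    (hstable : ¬ ∃ M', chipStep M M') :
    M = Finset.univ.val.map vt := by
  have hle : ∀ k, partialSum v k ≤ partialSum vt k := by
    intro k
    rcases Nat.eq_zero_or_pos k with rfl | hk
    · simp [partialSum]
    rcases lt_or_ge k (n + 1) with hkn | hkn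
    · exact (hstrict k hk hkn).le
    · rw [partialSum_of_le v hkn, partialSum_of_le vt hkn, hsum]
  have hdom := ((dominated_map_univ hv).mono hle).of_reflTransGen hreach
    fun m hm => partialSum_add_two_sub_lt hvt (by simpa using hm)
  obtain ⟨hcard, hMsum⟩ := card_eq_and_sum_eq_of_reflTransGen hreach
  obtain ⟨w, hw, rfl⟩ := Multiset.exists_strictAnti_of_nodup (k := n + 1)
    (nodup_of_not_exists_chipStep hstable) (hcard.trans (by simp))
  rw [eq_of_partialSum_le hw hvt (fun s hs t ht => hgap s t hs ht)
    (fun k => (hdom.partialSum_le k).trans_eq (partialSum_min vt k)) (hMsum.trans hsum)]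

end CF
end
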